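/- arXiv:1604.07214 — 2 statements merged into one kernel-verified Lean document; each statement's English description precedes it below -/
import Mathlib

section
/- Let p > 1 be an integer and X a finite set of distinct non-negative integers that is non-terminal, i.e., λ(X) is nonempty. Let M = ord(X) be the minimal L with t_L(X) ≠ 0 in the p-core tower row sizes. Then X has an option Y = X ∪ {x − p^M} \ {x} (a legal single-hook removal of a p^M-hook) such that t_L(Y) ≡ t_L(X) − 1 (mod p) for L = M and t_{≥M+1}(Y) ⪰ t_{≥M+1}(X) in the order comparing sequences from the highest differing index (a 'p^*-option' exists). -/
/-- `hL p L X` is the number of hooks of `λ(X)` with length divisible by `p^L`. -/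
def hL (p L : ℕ) (X : Finset ℕ) : ℕ :=
  ∑ x ∈ X, ((Finset.range x).filter fun y => y ∉ X ∧ p ^ L ∣ x - y).card

/-- `t_L(X) = h_L(X) - p h_{L+1}(X)`, the total size of the `L`-th row of the
`p`-core tower (a genuine natural number). -/
def tN (p L : ℕ) (X : Finset ℕ) : ℕ := hL p L X - p * hL p (L + 1) X

/-- `f ⪰ g`: either `f = g`, or `f > g` at the largest index where they differ. -/
def Succeq (f g : ℕ → ℕ) : Prop :=
  f = g ∨ ∃ N, g N < f N ∧ ∀ L, N < L → f L = g L

/-!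
Removing a `d`-hook moves a bead from `a` to `a - d`. On the `m`-abacus, with `R` the number of
beads on a runner, this changes the number of `m`-hooks by `-k` if `d = k m`, and by
`R a - R (a - d) - 1 - [a % m < d]` if `d < m`. Hence removing a `p^M`-hook lowers `h_M` by one,
and it lowers no `h_L` with `L > M` provided the runner of `a` has a `Surplus` over the runner of
`a - p^M` on every `p^L`-abacus.

Such a bead exists. If no runner of the `p^(M+1)`-abacus had a surplus, then `h_M ≤ p h_(M+1)`:
removing `p^(M+1)`-hooks keeps all runner sizes and lowers `h_M` by `p`, and once every
`p^(M+1)`-runner is flush the lack of surplus leaves no `p^M`-hook either; so `t_M = 0`. A surplus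
on a `p^L`-runner passes, by summing over sub-runners, to one of its `p` sub-runners on the
`p^(L+1)`-abacus; once `p^L` exceeds `X`, runners hold at most one bead and the surplus singles
out `a`. Finally `h_L` grows weakly for every `L > M` and is eventually unchanged, so at the last
level where it changes, `t_L = h_L - p h_(L+1)` increases.
-/

namespace Abacus

open Finset

variable {m : ℕ} {X : Finset ℕ}

def gapsBelow (m : ℕ) (X : Finset ℕ) (v : ℕ) : ℕ := #{y ∈ range v | y ∉ X ∧ m ∣ v - y}

def beadsBelow (m : ℕ) (X : Finset ℕ) (v : ℕ) : ℕ := #{z ∈ X | z < v ∧ m ∣ v - z}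

def beadsAbove (m : ℕ) (X : Finset ℕ) (v : ℕ) : ℕ := #{z ∈ X | v < z ∧ m ∣ z - v}

def runnerCard (m : ℕ) (X : Finset ℕ) (v : ℕ) : ℕ := #{z ∈ X | z ≡ v [MOD m]}

def hookCount (m : ℕ) (X : Finset ℕ) : ℕ := ∑ x ∈ X, gapsBelow m X x

theorem hL_eq_hookCount (p L : ℕ) (X : Finset ℕ) : hL p L X = hookCount (p ^ L) X := rfl

theorem card_filter_range_dvd_sub (m v : ℕ) : #{y ∈ range v | m ∣ v - y} = v / m := by
  rw [← Nat.card_multiples, card_filter, card_filter, ← sum_range_reflect]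
  refine sum_congr rfl fun y hy => ?_
  rw [show v - (v - 1 - y) = y + 1 by simp at hy; omega]

theorem gapsBelow_add_beadsBelow (X : Finset ℕ) (v : ℕ) :
    gapsBelow m X v + beadsBelow m X v = v / m := by
  rw [← card_filter_range_dvd_sub, ← card_filter_add_card_filter_not (p := (· ∉ X))]
  simp only [gapsBelow, beadsBelow, filter_filter, not_not]
  congr 2 <;> ext y <;> simp only [mem_filter, mem_range] <;> tauto

theorem runnerCard_eq_beadsBelow_add (X : Finset ℕ) (v : ℕ) :
    runnerCard m X v = beadsBelow m X v + (if v ∈ X then 1 else 0) + beadsAbove m X v := by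
  simp only [runnerCard, beadsBelow, beadsAbove, card_filter, ← sum_add_distrib,
    ← sum_ite_eq' X v fun _ => 1]
  refine sum_congr rfl fun z _ => ?_
  rcases lt_trichotomy z v with h | rfl | h
  · simp [h, h.ne, h.not_gt, Nat.modEq_iff_dvd' h.le]
  · simp [Nat.ModEq.refl]
  · simp [h, h.ne', h.not_gt, Nat.ModEq.comm, Nat.modEq_iff_dvd' h.le]

theorem gapsBelow_sub_beadsAbove (X : Finset ℕ) (v : ℕ) :
    (gapsBelow m X v : ℤ) - beadsAbove m X v =
      (v / m : ℕ) - runnerCard m X v + if v ∈ X then 1 else 0 := by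
  have := gapsBelow_add_beadsBelow (m := m) X v
  rw [runnerCard_eq_beadsBelow_add, ← this]
  split_ifs <;> push_cast <;> ring

theorem gapsBelow_eq_gapsBelow_insert_add {a : ℕ} (ha : a ∉ X) (x : ℕ) :
    gapsBelow m X x = gapsBelow m (insert a X) x + if a < x ∧ m ∣ x - a then 1 else 0 := by
  unfold gapsBelow
  split_ifs with h
  · rw [← card_insert_of_notMem (a := a) (s := {y ∈ range x | y ∉ insert a X ∧ m ∣ x - y})
      (by simp)]
    congr 1; ext y; by_cases hy : y = a <;> simp [hy, h, ha]
  · rw [add_zero]; congr 1; ext y; by_cases hy : y = a <;> simp [hy, h, ha]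

theorem gapsBelow_insert_self (X : Finset ℕ) (a : ℕ) :
    gapsBelow m (insert a X) a = gapsBelow m X a := by
  unfold gapsBelow
  congr 1; ext y; simp only [mem_filter, mem_range, mem_insert, not_or]
  exact ⟨fun ⟨h1, ⟨_, h2⟩, h3⟩ => ⟨h1, h2, h3⟩, fun ⟨h1, h2, h3⟩ => ⟨h1, ⟨h1.ne, h2⟩, h3⟩⟩

theorem hookCount_erase_add {a : ℕ} (ha : a ∈ X) :
    hookCount m (X.erase a) + gapsBelow m X a = hookCount m X + beadsAbove m X a := by
  have hmove := gapsBelow_eq_gapsBelow_insert_add (m := m) (notMem_erase a X)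
  rw [insert_erase ha] at hmove
  rw [hookCount, hookCount, sum_congr rfl fun x _ => hmove x, sum_add_distrib,
    ← sum_erase_add _ _ ha, beadsAbove, card_filter, ← sum_erase_add _ _ ha]
  simp only [lt_self_iff_false, false_and, if_false, add_zero]
  ring

theorem hookCount_insert_add {b : ℕ} (hb : b ∉ X) :
    hookCount m (insert b X) + beadsAbove m X b = hookCount m X + gapsBelow m X b := by
  rw [hookCount, hookCount, sum_insert hb, gapsBelow_insert_self,
    sum_congr rfl fun x _ => gapsBelow_eq_gapsBelow_insert_add hb x, sum_add_distrib,
    beadsAbove, card_filter]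
  ring

theorem hookCount_move {a b : ℕ} (ha : a ∈ X) (hb : b ∉ X) (hba : b < a) :
    (hookCount m (insert b (X.erase a)) : ℤ) =
      hookCount m X + runnerCard m X a - runnerCard m X b + (b / m : ℕ) - (a / m : ℕ) - 1 +
        if m ∣ a - b then 1 else 0 := by
  have herase := hookCount_erase_add (m := m) ha
  have hinsert := hookCount_insert_add (m := m) (X := X.erase a) (b := b)
    (fun h => hb (mem_of_mem_erase h))
  have hgaps : gapsBelow m (X.erase a) b = gapsBelow m X b := by
    unfold gapsBelow; congr 1; ext y; simp only [mem_filter, mem_range, mem_erase]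
    exact ⟨fun ⟨h1, h2, h3⟩ => ⟨h1, fun hy => h2 ⟨by omega, hy⟩, h3⟩,
      fun ⟨h1, h2, h3⟩ => ⟨h1, fun h => h2 h.2, h3⟩⟩
  have hbeads : beadsAbove m (X.erase a) b + (if m ∣ a - b then 1 else 0) = beadsAbove m X b := by
    unfold beadsAbove
    rw [filter_erase]
    split_ifs with h
    · rw [card_erase_add_one (by simp [ha, hba, h])]
    · rw [erase_eq_of_notMem (by simp [h])]; rfl
  have hA := gapsBelow_sub_beadsAbove (m := m) X a
  have hB := gapsBelow_sub_beadsAbove (m := m) X b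
  rw [if_pos ha] at hA
  rw [if_neg hb, ← hbeads] at hB
  rw [hgaps] at hinsert
  push_cast at hB
  omega

theorem runnerCard_congr (X : Finset ℕ) {v w : ℕ} (h : v ≡ w [MOD m]) :
    runnerCard m X v = runnerCard m X w := by
  unfold runnerCard
  congr 1
  exact filter_congr fun z _ => ⟨fun hz => hz.trans h, fun hz => hz.trans h.symm⟩

theorem hookCount_move_add_mul (hm : 0 < m) {a b k : ℕ} (ha : a ∈ X) (hb : b ∉ X)
    (hab : b + k * m = a) : hookCount m (insert b (X.erase a)) + k = hookCount m X := by
  have hk : 0 < k := Nat.pos_of_ne_zero fun hk => hb (by subst hab; simpa [hk] using ha)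
  have hmove := hookCount_move (m := m) ha hb (by nlinarith)
  subst hab
  rw [runnerCard_congr X (Nat.add_mul_mod_self_right b k m), Nat.add_mul_div_right _ _ hm,
    if_pos (by simp)] at hmove
  push_cast at hmove
  omega

theorem exists_mem_sub_notMem_of_hookCount_ne_zero (h : hookCount m X ≠ 0) :
    ∃ a ∈ X, m ≤ a ∧ a - m ∉ X := by
  obtain ⟨x, hx, hgap⟩ := exists_ne_zero_of_sum_ne_zero h
  obtain ⟨y, hy⟩ := card_ne_zero.1 hgap
  simp only [mem_filter, mem_range] at hy
  obtain ⟨hyx, hyX, k, hk⟩ := hy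
  have hex : ∃ j, y + m * j ∈ X := ⟨k, by rwa [← hk, Nat.add_sub_cancel' hyx.le]⟩
  have hj : Nat.find hex ≠ 0 := fun h0 => hyX (by simpa [h0] using Nat.find_spec hex)
  obtain ⟨j, hj'⟩ := Nat.exists_eq_succ_of_ne_zero hj
  refine ⟨y + m * Nat.find hex, Nat.find_spec hex, ?_, ?_⟩
  · rw [hj', Nat.mul_succ]; omega
  · rw [hj', Nat.mul_succ, ← Nat.add_assoc, Nat.add_sub_cancel]
    exact Nat.find_min hex (by omega)

theorem hookCount_eq_zero_of_forall_lt (h : ∀ z ∈ X, z < m) : hookCount m X = 0 := by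
  refine sum_eq_zero fun x hx => card_eq_zero.2 (filter_eq_empty_iff.2 fun y hy hdvd => ?_)
  have := Nat.le_of_dvd (by simp at hy; omega) hdvd.2
  have := h x hx
  omega

theorem hookCount_induction (hm : 0 < m) {P : Finset ℕ → Prop}
    (zero : ∀ X, hookCount m X = 0 → P X)
    (move : ∀ X a, a ∈ X → m ≤ a → a - m ∉ X → P (insert (a - m) (X.erase a)) → P X)
    (X : Finset ℕ) : P X := by
  induction hX : hookCount m X using Nat.strong_induction_on generalizing X with
  | _ n ih =>
    by_cases h0 : hookCount m X = 0
    · exact zero X h0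
    obtain ⟨a, ha, hma, hna⟩ := exists_mem_sub_notMem_of_hookCount_ne_zero h0
    have hY := hookCount_move_add_mul hm ha hna (k := 1) (by omega)
    exact move X a ha hma hna (ih _ (by omega) _ rfl)

theorem mul_hookCount_mul_le (hm : 0 < m) {k : ℕ} (hk : 0 < k) (X : Finset ℕ) :
    k * hookCount (m * k) X ≤ hookCount m X := by
  induction X using hookCount_induction (Nat.mul_pos hm hk) with
  | zero X h0 => simp [h0]
  | move X a ha hma hna ih =>
    have h1 := hookCount_move_add_mul (Nat.mul_pos hm hk) ha hna (k := 1) (by omega)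
    have hk' := hookCount_move_add_mul hm ha hna (k := k) (by rw [Nat.mul_comm k m]; omega)
    nlinarith

theorem div_eq_sub_div_add_ite (hm : 0 < m) {a d : ℕ} (hda : d ≤ a) (hdm : d ≤ m) :
    a / m = (a - d) / m + if a % m < d then 1 else 0 := by
  have hdiv := Nat.div_add_mod (a - d) m
  have hmod := Nat.mod_lt (a - d) hm
  by_cases hr : (a - d) % m + d < m
  · obtain ⟨hq, hr'⟩ := (Nat.div_mod_unique hm).2
      (⟨by omega, hr⟩ : (a - d) % m + d + m * ((a - d) / m) = a ∧ _)
    rw [hq, hr', if_neg (by omega), add_zero]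
  · obtain ⟨hq, hr'⟩ := (Nat.div_mod_unique hm).2
      (⟨by rw [Nat.mul_succ]; omega, by omega⟩ :
        (a - d) % m + d - m + m * ((a - d) / m + 1) = a ∧ _ < m)
    rw [hq, hr', if_pos (by omega)]

theorem runnerCard_add_sub (X : Finset ℕ) {a d : ℕ} (hda : d ≤ a) (hdm : d ≤ m) :
    runnerCard m X (a + (m - d)) = runnerCard m X (a - d) :=
  runnerCard_congr X (by rw [show a + (m - d) = a - d + m by omega]; exact Nat.add_mod_right _ _)

theorem mem_iff_div_lt_runnerCard (h0 : hookCount m X = 0) (z : ℕ) :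
    z ∈ X ↔ z / m < runnerCard m X z := by
  have hgaps : ∀ x ∈ X, gapsBelow m X x = 0 := sum_eq_zero_iff.1 h0
  have hsum := gapsBelow_add_beadsBelow (m := m) X z
  rw [runnerCard_eq_beadsBelow_add]
  by_cases hz : z ∈ X
  · simp only [hz, if_true, hgaps z hz, true_iff] at hsum ⊢
    omega
  · have habove : beadsAbove m X z = 0 := card_eq_zero.2 <| filter_eq_empty_iff.2
      fun w hw ⟨hzw, hdvd⟩ =>
        (card_ne_zero_of_mem (a := z) (by simp [hzw, hz, hdvd])).elim (hgaps w hw)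
    simp only [hz, if_false, habove, false_iff, not_lt]
    omega

theorem runnerCard_move_of_modEq {a b : ℕ} (ha : a ∈ X) (hb : b ∉ X) (hab : b ≡ a [MOD m]) :
    runnerCard m (insert b (X.erase a)) = runnerCard m X := by
  funext v
  unfold runnerCard
  rw [filter_insert, filter_erase]
  by_cases hv : a ≡ v [MOD m]
  · rw [if_pos (hab.trans hv), card_insert_of_notMem (by simp [hb]),
      card_erase_add_one (by simp [ha, hv])]
  · rw [if_neg fun h => hv (hab.symm.trans h), erase_eq_of_notMem (by simp [hv])]

/-- On the `m`-abacus, runner `c` carries more beads than runner `c - d`, and at least two more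
when going down by `d` wraps around; this is what keeps the removal of a `d`-hook from runner `c`
from losing `m`-hooks. -/
def Surplus (m d : ℕ) (X : Finset ℕ) (c : ℕ) : Prop :=
  runnerCard m X (c + (m - d)) + 1 + (if c % m < d then 1 else 0) ≤ runnerCard m X c

theorem hookCount_le_move_of_surplus {d a : ℕ} (hdm : d < m) (ha : a ∈ X) (hda : d ≤ a)
    (hna : a - d ∉ X) (hs : Surplus m d X a) :
    hookCount m X ≤ hookCount m (insert (a - d) (X.erase a)) := by
  have hd0 : 0 < d := Nat.pos_of_ne_zero fun hd => hna (by simpa [hd] using ha)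
  have hmove := hookCount_move (m := m) ha hna (by omega)
  have hdiv := div_eq_sub_div_add_ite (by omega) hda hdm.le
  rw [Surplus, runnerCard_add_sub X hda hdm.le] at hs
  rw [Nat.sub_sub_self hda, if_neg (Nat.not_dvd_of_pos_of_lt hd0 hdm), hdiv] at hmove
  push_cast at hmove
  split_ifs at hmove hs <;> omega

theorem hookCount_le_of_forall_not_surplus (hm : 0 < m) {k : ℕ} (hk : 0 < k) (X : Finset ℕ)
    (h : ∀ c, ¬ Surplus (m * k) m X c) : hookCount m X ≤ k * hookCount (m * k) X := by
  have hmk : m ≤ m * k := Nat.le_mul_of_pos_right m hk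
  induction X using hookCount_induction (Nat.mul_pos hm hk) with
  | zero X h0 =>
    suffices hookCount m X = 0 by omega
    by_contra hpos
    obtain ⟨a, ha, hma, hna⟩ := exists_mem_sub_notMem_of_hookCount_ne_zero hpos
    have hs := h a
    rw [Surplus, runnerCard_add_sub X hma hmk] at hs
    have hdiv := div_eq_sub_div_add_ite (Nat.mul_pos hm hk) hma hmk
    have h1 := (mem_iff_div_lt_runnerCard h0 a).1 ha
    have h2 := (mem_iff_div_lt_runnerCard h0 (a - m)).not.1 hna
    split_ifs at hs hdiv <;> omega
  | move X a ha hma hna ih =>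
    have hR := runnerCard_move_of_modEq ha hna ((Nat.modEq_iff_dvd' (by omega)).2 (by
      rw [Nat.sub_sub_self hma]))
    have h1 := hookCount_move_add_mul (Nat.mul_pos hm hk) ha hna (k := 1) (by omega)
    have hk' := hookCount_move_add_mul hm ha hna (k := k) (by rw [Nat.mul_comm k m]; omega)
    have := ih (by simpa only [Surplus, hR] using h)
    nlinarith

theorem mod_add_mul_lt_mul (hm : 0 < m) (c : ℕ) {j k : ℕ} (hj : j < k) :
    c % m + j * m < m * k := by
  have := Nat.mod_lt c hm
  nlinarith

theorem runnerCard_eq_sum_runnerCard_mul (hm : 0 < m) {k : ℕ} (hk : 0 < k) (S : Finset ℕ)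
    (v : ℕ) : runnerCard m S v = ∑ j ∈ range k, runnerCard (m * k) S (v % m + j * m) := by
  rw [runnerCard, card_eq_sum_card_fiberwise (f := fun z => z / m % k) (t := range k)
    fun z _ => mem_range.2 (Nat.mod_lt _ hk)]
  refine sum_congr rfl fun j hj => ?_
  have hlt := mod_add_mul_lt_mul hm v (mem_range.1 hj)
  rw [runnerCard, filter_filter]
  congr 1
  refine filter_congr fun z _ => ?_
  simp only [Nat.ModEq, Nat.mod_eq_of_lt hlt]
  constructor
  · rintro ⟨h1, h2⟩
    rw [Nat.mod_mul, h1, h2, Nat.mul_comm]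
  · intro h
    constructor
    · rw [← Nat.mod_mul_right_mod z m k, h, Nat.add_mul_mod_self_right, Nat.mod_mod]
    · rw [← Nat.mod_mul_right_div_self, h, Nat.add_mul_div_right _ _ hm,
        Nat.div_eq_of_lt (Nat.mod_lt _ hm), zero_add]

theorem runnerCard_add_sub_eq_map {d : ℕ} (hdm : d ≤ m) (X : Finset ℕ) (v : ℕ) :
    runnerCard m X (v + (m - d)) = runnerCard m (X.map (addRightEmbedding d)) v := by
  rw [runnerCard, runnerCard, filter_map, card_map]
  congr 1
  refine filter_congr fun z _ => ?_
  have hv : v + (m - d) + d ≡ v [MOD m] := by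
    rw [Nat.add_assoc, Nat.sub_add_cancel hdm]; exact Nat.add_mod_right v m
  exact ⟨fun h => (h.add_right d).trans hv,
    fun h => Nat.ModEq.add_right_cancel' d (h.trans hv.symm)⟩

theorem sum_ite_mod_mul_lt (hm : 0 < m) {k d : ℕ} (hk : 0 < k) (hdm : d ≤ m) (c : ℕ) :
    ∑ j ∈ range k, (if (c % m + j * m) % (m * k) < d then 1 else 0) =
      if c % m < d then 1 else 0 := by
  rw [sum_eq_single_of_mem 0 (mem_range.2 hk) fun j hj hj0 => ?_]
  · rw [zero_mul, add_zero,
      Nat.mod_eq_of_lt ((Nat.mod_lt c hm).trans_le (Nat.le_mul_of_pos_right m hk))]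
  · rw [Nat.mod_eq_of_lt (mod_add_mul_lt_mul hm c (mem_range.1 hj)), if_neg]
    have : m ≤ j * m := Nat.le_mul_of_pos_left m (Nat.pos_of_ne_zero hj0)
    omega

theorem surplus_congr (d : ℕ) (X : Finset ℕ) {c c' : ℕ} (h : c ≡ c' [MOD m]) :
    Surplus m d X c ↔ Surplus m d X c' := by
  rw [Surplus, Surplus, runnerCard_congr X h, runnerCard_congr X (h.add_right _), h]

theorem exists_surplus_mul (hm : 0 < m) {k d c : ℕ} (hk : 0 < k) (hdm : d ≤ m)
    (hs : Surplus m d X c) : ∃ c', c' ≡ c [MOD m] ∧ Surplus (m * k) d X c' := by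
  by_contra! hnot
  have hchild : ∀ j ∈ range k,
      runnerCard (m * k) X (c % m + j * m) ≤
        runnerCard (m * k) (X.map (addRightEmbedding d)) (c % m + j * m) +
          if (c % m + j * m) % (m * k) < d then 1 else 0 := by
    intro j _
    have := hnot (c % m + j * m) (by simp [Nat.ModEq, Nat.add_mul_mod_self_right])
    rw [Surplus, runnerCard_add_sub_eq_map (hdm.trans (Nat.le_mul_of_pos_right m hk))] at this
    omega
  have hsum := sum_le_sum hchild
  rw [sum_add_distrib, sum_ite_mod_mul_lt hm hk hdm, ← runnerCard_eq_sum_runnerCard_mul hm hk,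
    ← runnerCard_eq_sum_runnerCard_mul hm hk, ← runnerCard_add_sub_eq_map hdm] at hsum
  rw [Surplus] at hs
  omega

theorem surplus_iff_of_forall_lt (h : ∀ z ∈ X, z < m) {d c : ℕ} (hdm : d ≤ m) (hc : c < m) :
    Surplus m d X c ↔ c ∈ X ∧ d ≤ c ∧ c - d ∉ X := by
  have hR : ∀ v < m, runnerCard m X v = if v ∈ X then 1 else 0 := fun v hv => by
    have : X.filter (· ≡ v [MOD m]) = X.filter (· = v) := filter_congr fun z hz => by
      rw [Nat.ModEq, Nat.mod_eq_of_lt (h z hz), Nat.mod_eq_of_lt hv]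
    rw [runnerCard, this, filter_eq']
    split_ifs <;> simp
  rw [Surplus, Nat.mod_eq_of_lt hc, hR c hc]
  by_cases hdc : d ≤ c
  · rw [runnerCard_add_sub X hdc hdm, hR (c - d) (by omega), if_neg (show ¬c < d by omega)]
    split_ifs <;> simp_all
  · simp only [hdc, false_and, and_false, iff_false, if_pos (Nat.lt_of_not_le hdc)]
    split_ifs <;> omega

variable {p : ℕ}

theorem exists_forall_lt_pow (hp : 1 < p) (S : Finset ℕ) :
    ∃ Λ, ∀ L ≥ Λ, ∀ z ∈ S, z < p ^ L :=
  ⟨S.sup id, fun L hL z hz => (le_sup (f := id) hz).trans_lt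
    ((Nat.lt_pow_self hp).trans_le (Nat.pow_le_pow_right (by omega) hL))⟩

theorem exists_surplus_pow (hp : 0 < p) {d L₀ c : ℕ} (hd : d ≤ p ^ L₀)
    (hs : Surplus (p ^ L₀) d X c) {N : ℕ} (hN : L₀ ≤ N) :
    ∃ c', ∀ L, L₀ ≤ L → L ≤ N → Surplus (p ^ L) d X c' := by
  induction N, hN using Nat.le_induction with
  | base => exact ⟨c, fun L h1 h2 => by rwa [le_antisymm h2 h1]⟩
  | succ N hN ih =>
    obtain ⟨c', hc'⟩ := ih
    obtain ⟨c'', hmod, hs''⟩ := exists_surplus_mul (pow_pos hp N) hp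
      (hd.trans (Nat.pow_le_pow_right hp hN)) (hc' N hN le_rfl)
    refine ⟨c'', fun L h1 h2 => ?_⟩
    rcases h2.lt_or_eq with h2 | rfl
    · exact (surplus_congr d X (hmod.of_dvd (pow_dvd_pow p (by omega)))).2 (hc' L h1 (by omega))
    · rwa [pow_succ]

theorem exists_mem_surplus (hp : 1 < p) {d L₀ c : ℕ} (hd : d ≤ p ^ L₀)
    (hs : Surplus (p ^ L₀) d X c) :
    ∃ a ∈ X, d ≤ a ∧ a - d ∉ X ∧ ∀ L ≥ L₀, Surplus (p ^ L) d X a := by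
  obtain ⟨Λ, hΛ⟩ := exists_forall_lt_pow hp X
  obtain ⟨c', hc'⟩ := exists_surplus_pow (by omega) hd hs (le_max_right Λ L₀)
  have hpow : ∀ {L}, L₀ ≤ L → d ≤ p ^ L :=
    fun hL => hd.trans (Nat.pow_le_pow_right (by omega) hL)
  set a := c' % p ^ max Λ L₀
  have ha : a ∈ X ∧ d ≤ a ∧ a - d ∉ X :=
    (surplus_iff_of_forall_lt (hΛ _ (le_max_left Λ L₀)) (hpow (le_max_right Λ L₀))
      (Nat.mod_lt _ (by positivity))).1
      ((surplus_congr d X (Nat.mod_modEq c' _)).2 (hc' _ (le_max_right Λ L₀) le_rfl))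
  refine ⟨a, ha.1, ha.2.1, ha.2.2, fun L hL => ?_⟩
  rcases le_or_gt L (max Λ L₀) with hLN | hLN
  · exact (surplus_congr d X ((Nat.mod_modEq c' _).of_dvd (pow_dvd_pow p hLN))).2
      (hc' L hL hLN)
  · exact (surplus_iff_of_forall_lt (hΛ L (by omega)) (hpow hL)
      (hΛ L (by omega) a ha.1)).2 ha

end Abacus

theorem succeq_sub_mul_succ {p : ℕ} {f g : ℕ → ℕ} (hg : ∀ L, p * g (L + 1) ≤ g L)
    (hle : ∀ L, g L ≤ f L) (hev : ∃ Λ, ∀ L ≥ Λ, f L = g L) :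
    Succeq (fun L => f L - p * f (L + 1)) (fun L => g L - p * g (L + 1)) := by
  classical
  have hfind : ∀ L ≥ Nat.find hev, f L = g L := Nat.find_spec hev
  rcases Nat.eq_zero_or_pos (Nat.find hev) with h0 | hpos
  · left
    funext L
    rw [hfind L (by omega), hfind (L + 1) (by omega)]
  · right
    set N := Nat.find hev - 1
    have hgt : ∀ L, N < L → f L = g L := fun L hL => hfind L (by omega)
    have hne : f N ≠ g N := fun h => Nat.find_min hev (show N < Nat.find hev by omega)
      fun L hL => (eq_or_lt_of_le hL).elim (fun h' => h' ▸ h) (hgt L)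
    refine ⟨N, ?_, fun L hL => by simp only [hgt L hL, hgt (L + 1) (by omega)]⟩
    have hlt := lt_of_le_of_ne (hle N) (Ne.symm hne)
    have := hg N
    simp only [hgt (N + 1) (by omega)]
    omega

open Abacus

theorem mul_hL_succ_le (p L : ℕ) (X : Finset ℕ) : p * hL p (L + 1) X ≤ hL p L X := by
  rcases Nat.eq_zero_or_pos p with rfl | hp
  · simp
  · rw [hL_eq_hookCount, hL_eq_hookCount, pow_succ]
    exact mul_hookCount_mul_le (pow_pos hp L) hp X

theorem tN_modEq_of_hL_add_one {p M : ℕ} {X Y : Finset ℕ} (h : hL p M Y + 1 = hL p M X) :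
    (tN p M Y : ℤ) ≡ tN p M X - 1 [ZMOD p] := by
  rw [Int.modEq_iff_dvd, tN, tN, Nat.cast_sub (mul_hL_succ_le p M Y),
    Nat.cast_sub (mul_hL_succ_le p M X)]
  refine ⟨hL p (M + 1) Y - hL p (M + 1) X, ?_⟩
  have : (hL p M Y : ℤ) + 1 = hL p M X := by exact_mod_cast h
  push_cast
  linear_combination -this

theorem exists_surplus_of_tN_ne_zero {p M : ℕ} (hp : 0 < p) {X : Finset ℕ}
    (hM : tN p M X ≠ 0) : ∃ c, Surplus (p ^ (M + 1)) (p ^ M) X c := by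
  by_contra! h
  rw [pow_succ] at h
  have := hookCount_le_of_forall_not_surplus (pow_pos hp M) hp X h
  rw [← pow_succ] at this
  exact hM (Nat.sub_eq_zero_of_le this)

theorem stmt14_general (p : ℕ) (hp : 1 < p) (X : Finset ℕ)
    (M : ℕ) (hM : tN p M X ≠ 0) :
    ∃ x ∈ X, p ^ M ≤ x ∧ x - p ^ M ∉ X ∧
      Int.ModEq (p : ℤ) (tN p M (insert (x - p ^ M) (X.erase x)) : ℤ)
        ((tN p M X : ℤ) - 1) ∧
      Succeq (fun L => tN p (M + 1 + L) (insert (x - p ^ M) (X.erase x)))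
        (fun L => tN p (M + 1 + L) X) := by
  have hpM : 0 < p ^ M := pow_pos (by omega) M
  obtain ⟨c, hc⟩ := exists_surplus_of_tN_ne_zero (by omega) hM
  obtain ⟨a, ha, hda, hna, hs⟩ :=
    exists_mem_surplus hp (Nat.pow_le_pow_right (by omega) M.le_succ) hc
  refine ⟨a, ha, hda, hna,
    tN_modEq_of_hL_add_one (hookCount_move_add_mul hpM ha hna (k := 1) (by omega)), ?_⟩
  obtain ⟨Λ, hΛ⟩ := exists_forall_lt_pow hp (X ∪ insert (a - p ^ M) (X.erase a))
  refine succeq_sub_mul_succ (fun L => mul_hL_succ_le p _ X) (fun L => ?_) ⟨Λ, fun L hL => ?_⟩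
  · exact hookCount_le_move_of_surplus (Nat.pow_lt_pow_right hp (by omega)) ha hda hna
      (hs _ (by omega))
  · have hlt := hΛ (M + 1 + L) (by omega)
    rw [hL_eq_hookCount, hL_eq_hookCount,
      hookCount_eq_zero_of_forall_lt fun z hz => hlt z (Finset.mem_union_right _ hz),
      hookCount_eq_zero_of_forall_lt fun z hz => hlt z (Finset.mem_union_left _ hz)]

/-- Every non-terminal position has a `p^*`-option: removal of a single
`p^M`-hook (`M = ord X`) decreasing `t_M` by `1` mod `p` and not decreasing the
tail `(t_L)_{L ≥ M+1}` in the order `⪯`. -/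
theorem stmt14 (p : ℕ) (hp : 1 < p) (X : Finset ℕ) (hnt : 0 < hL p 0 X)
    (M : ℕ) (hM0 : ∀ L < M, tN p L X = 0) (hM : tN p M X ≠ 0) :
    ∃ x ∈ X, p ^ M ≤ x ∧ x - p ^ M ∉ X ∧
      Int.ModEq (p : ℤ) (tN p M (insert (x - p ^ M) (X.erase x)) : ℤ)
        ((tN p M X : ℤ) - 1) ∧
      Succeq (fun L => tN p (M + 1 + L) (insert (x - p ^ M) (X.erase x)))
        (fun L => tN p (M + 1 + L) X) :=
  stmt14_general p hp X M hM
end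

section
/- Let p > 1 and let X be a finite set of distinct non-negative integers with ord(X) = M > 0 (that is, t_L(X) = 0 for L < M and t_M(X) ≠ 0), and suppose |X| ≡ 0 (mod p^M). Then |X_R| = |X| / p^L for every 0 ≤ L ≤ M and every residue R mod p^L, where X_R = {x ∈ X : x ≡ R (mod p^L)}. -/
open Finset

def hooks (q : ℕ) (X : Finset ℕ) : ℕ :=
  ∑ x ∈ X, #{y ∈ range x | y ∉ X ∧ q ∣ x - y}

def residueCount (q R : ℕ) (X : Finset ℕ) : ℕ := #{x ∈ X | x % q = R}

lemma sum_range_mul_eq_sum_sum {M : Type*} [AddCommMonoid M] (f : ℕ → M) (q p : ℕ) :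
    ∑ S ∈ range (q * p), f S = ∑ R ∈ range q, ∑ j ∈ range p, f (R + q * j) := by
  induction p with
  | zero => simp
  | succ p ih =>
    rw [mul_add_one, sum_range_add, ih]
    simp only [sum_range_succ, sum_add_distrib, add_comm (q * p)]

lemma card_filter_dvd_sub {q : ℕ} (hq : 0 < q) (x : ℕ) : #{y ∈ range x | q ∣ x - y} = x / q := by
  have hcount := Nat.count_modEq_card x hq x
  simp only [Nat.count_eq_card_filter_range, lt_self_iff_false, if_false, add_zero] at hcount
  rw [← hcount]
  refine congrArg card (filter_congr fun y hy => ?_)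
  exact (Nat.modEq_iff_dvd' (mem_range.mp hy).le).symm

lemma sum_card_filter_lt (S : Finset ℕ) : ∑ x ∈ S, #{y ∈ S | y < x} = (#S).choose 2 := by
  induction S using Finset.induction_on_max with
  | empty => simp
  | insert a s hlt ih =>
    have ha : a ∉ s := fun h => lt_irrefl a (hlt a h)
    have hbelow : {y ∈ insert a s | y < a} = s := by
      rw [filter_insert, if_neg (lt_irrefl a), filter_true_of_mem hlt]
    have hrest : ∀ x ∈ s, #{y ∈ insert a s | y < x} = #{y ∈ s | y < x} := fun x hx => by
      rw [filter_insert, if_neg (hlt x hx).not_gt]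
    rw [sum_insert ha, hbelow, sum_congr rfl hrest, ih, card_insert_of_notMem ha,
      Nat.choose_succ_succ', Nat.choose_one_right, add_comm]

/-- Each of the `x / q` numbers `y < x` with `y ≡ x [MOD q]` is either the foot of a hook
(`y ∉ X`) or the smaller member of a pair inside a residue class of `X`. -/
theorem hooks_add_sum_choose_two {q : ℕ} (hq : 0 < q) (X : Finset ℕ) :
    hooks q X + ∑ R ∈ range q, (residueCount q R X).choose 2 = ∑ x ∈ X, x / q := by
  have hsplit : ∀ x ∈ X,
      #{y ∈ range x | y ∉ X ∧ q ∣ x - y} + #{y ∈ X | y < x ∧ y % q = x % q} = x / q := by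
    intro x _
    rw [← card_filter_dvd_sub hq x,
      ← card_filter_add_card_filter_not (s := {y ∈ range x | q ∣ x - y}) (· ∉ X),
      filter_filter, filter_filter]
    congr 1
    · exact congrArg card (filter_congr fun y _ => and_comm)
    · congr 1
      ext y
      simp only [mem_filter, mem_range, not_not]
      constructor
      · rintro ⟨hyX, hyx, hmod⟩
        exact ⟨hyx, (Nat.modEq_iff_dvd' hyx.le).mp hmod, hyX⟩
      · rintro ⟨hyx, hdvd, hyX⟩
        exact ⟨hyX, hyx, (Nat.modEq_iff_dvd' hyx.le).mpr hdvd⟩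
  have hpairs : ∑ x ∈ X, #{y ∈ X | y < x ∧ y % q = x % q}
      = ∑ R ∈ range q, (residueCount q R X).choose 2 := by
    rw [← sum_fiberwise_of_maps_to (g := (· % q)) fun x _ => mem_range.mpr (Nat.mod_lt x hq)]
    refine sum_congr rfl fun R _ => ?_
    rw [residueCount, ← sum_card_filter_lt]
    refine sum_congr rfl fun x hx => ?_
    rw [(mem_filter.mp hx).2, filter_filter]
    exact congrArg card (filter_congr fun y _ => and_comm)
  rw [hooks, ← hpairs, ← sum_add_distrib]
  exact sum_congr rfl hsplit

lemma eq_range_card_of_forall_lt_mem {T : Finset ℕ} (hT : ∀ x ∈ T, ∀ y < x, y ∈ T) :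
    T = range #T := by
  rcases T.eq_empty_or_nonempty with rfl | hne
  · rfl
  · have hrange : T = range (T.max' hne + 1) := by
      ext y
      rw [mem_range, Nat.lt_succ_iff]
      refine ⟨T.le_max' y, fun hy => ?_⟩
      rcases hy.lt_or_eq with hy | rfl
      · exact hT _ (T.max'_mem hne) y hy
      · exact T.max'_mem hne
    conv_rhs => rw [hrange, card_range]
    exact hrange

lemma eq_range_card_of_hooks_one_eq_zero {T : Finset ℕ} (h : hooks 1 T = 0) : T = range #T := by
  refine eq_range_card_of_forall_lt_mem fun x hx y hy => ?_
  have hx0 := (sum_eq_zero_iff.mp h) x hx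
  rw [card_eq_zero, filter_eq_empty_iff] at hx0
  by_contra hyT
  exact hx0 (mem_range.mpr hy) ⟨hyT, one_dvd _⟩

lemma hooks_one_add_choose_two (T : Finset ℕ) : hooks 1 T + (#T).choose 2 = ∑ t ∈ T, t := by
  simpa [residueCount, Nat.mod_one] using hooks_add_sum_choose_two one_pos T

lemma add_mul_eq_add_mul_iff {p j j' k k' : ℕ} (hj : j < p) (hj' : j' < p) :
    j + p * k = j' + p * k' ↔ j = j' ∧ k = k' := by
  refine ⟨fun h => ?_, fun ⟨hj, hk⟩ => hj ▸ hk ▸ rfl⟩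
  have hp : 0 < p := by omega
  have hk : k = k' := by
    simpa [Nat.add_mul_div_left _ _ hp, Nat.div_eq_of_lt hj, Nat.div_eq_of_lt hj'] using
      congrArg (· / p) h
  subst hk
  exact ⟨by omega, rfl⟩

lemma add_mul_lt_mul_iff {p j k d : ℕ} (hj : j < p) : j + p * k < p * d ↔ k < d := by
  constructor
  · intro h
    by_contra hdk
    have := Nat.mul_le_mul_left p (not_lt.mp hdk)
    omega
  · intro h
    have := Nat.mul_le_mul_left p (Nat.succ_le_of_lt h)
    rw [Nat.mul_succ] at this
    omega

section AbacusSet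

variable (p : ℕ) (m : ℕ → ℕ)

/-- The `p`-abacus with `m j` beads pushed to the top of runner `j`. Comparing its size and its
element sum through `hooks_one_add_choose_two` gives the two results below: the sum dominates
`C(size, 2)`, with equality only for an initial segment of `ℕ`. -/
def abacusSet : Finset ℕ :=
  ((range p).sigma fun j => range (m j)).image fun jk => jk.1 + p * jk.2

variable {p}

lemma injOn_abacusSet :
    Set.InjOn (fun jk : (_ : ℕ) × ℕ => jk.1 + p * jk.2) ((range p).sigma fun j => range (m j)) := by
  rintro ⟨j, k⟩ hjk ⟨j', k'⟩ hjk' h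
  simp only [coe_sigma, Set.mem_sigma_iff, coe_range, Set.mem_Iio] at hjk hjk'
  obtain ⟨rfl, rfl⟩ := (add_mul_eq_add_mul_iff hjk.1 hjk'.1).mp h
  rfl

lemma card_abacusSet : #(abacusSet p m) = ∑ j ∈ range p, m j := by
  rw [abacusSet, card_image_of_injOn (injOn_abacusSet m), card_sigma]
  simp only [card_range]

lemma sum_abacusSet :
    ∑ t ∈ abacusSet p m, t = ∑ j ∈ range p, (j * m j + p * (m j).choose 2) := by
  rw [abacusSet, sum_image (injOn_abacusSet m), sum_sigma]
  refine sum_congr rfl fun j _ => ?_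
  rw [sum_add_distrib, sum_const, card_range, smul_eq_mul, ← mul_sum, sum_range_id,
    Nat.choose_two_right, mul_comm]

lemma add_mul_mem_abacusSet {j k : ℕ} (hj : j < p) : j + p * k ∈ abacusSet p m ↔ k < m j := by
  simp only [abacusSet, mem_image, mem_sigma, mem_range]
  constructor
  · rintro ⟨⟨j', k'⟩, ⟨hj', hk'⟩, h⟩
    obtain ⟨rfl, rfl⟩ := (add_mul_eq_add_mul_iff hj' hj).mp h
    exact hk'
  · exact fun hk => ⟨⟨j, k⟩, ⟨hj, hk⟩, rfl⟩

theorem choose_two_sum_le :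
    (∑ j ∈ range p, m j).choose 2 ≤ ∑ j ∈ range p, (j * m j + p * (m j).choose 2) := by
  rw [← card_abacusSet, ← sum_abacusSet, ← hooks_one_add_choose_two]
  exact le_add_self

theorem eq_sum_div_of_sum_eq_choose_two
    (h : ∑ j ∈ range p, (j * m j + p * (m j).choose 2) = (∑ j ∈ range p, m j).choose 2)
    (hdvd : p ∣ ∑ j ∈ range p, m j) {j : ℕ} (hj : j < p) :
    m j = (∑ j ∈ range p, m j) / p := by
  have hhooks : hooks 1 (abacusSet p m) = 0 := by
    have := hooks_one_add_choose_two (abacusSet p m)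
    rw [card_abacusSet, sum_abacusSet, h] at this
    omega
  have hT := eq_range_card_of_hooks_one_eq_zero hhooks
  obtain ⟨d, hd⟩ := hdvd
  rw [card_abacusSet, hd] at hT
  rw [hd, Nat.mul_div_cancel_left d (by omega)]
  refine eq_of_forall_lt_iff fun k => ?_
  rw [← add_mul_mem_abacusSet m hj, hT, mem_range, add_mul_lt_mul_iff hj]

end AbacusSet

lemma residueCount_eq_sum {q p R : ℕ} (hp : 0 < p) (hR : R < q) (X : Finset ℕ) :
    residueCount q R X = ∑ j ∈ range p, residueCount (q * p) (R + q * j) X := by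
  rw [residueCount, card_eq_sum_card_fiberwise (f := fun x => x / q % p) (t := range p)
    fun x _ => mem_range.mpr (Nat.mod_lt _ hp)]
  refine sum_congr rfl fun j _ => ?_
  rw [residueCount, filter_filter]
  refine congrArg card (filter_congr fun x _ => ?_)
  rw [Nat.mod_mul, add_mul_eq_add_mul_iff (Nat.mod_lt x (by omega)) hR]

lemma sum_div_mod_eq {q p : ℕ} (hq : 0 < q) (hp : 0 < p) (X : Finset ℕ) :
    ∑ x ∈ X, x / q % p = ∑ R ∈ range q, ∑ j ∈ range p, j * residueCount (q * p) (R + q * j) X := by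
  calc ∑ x ∈ X, x / q % p
      = ∑ S ∈ range (q * p), ∑ x ∈ X with x % (q * p) = S, x / q % p :=
        (sum_fiberwise_of_maps_to (fun x _ => mem_range.mpr (Nat.mod_lt x (by positivity))) _).symm
    _ = ∑ S ∈ range (q * p), S / q * residueCount (q * p) S X := by
        refine sum_congr rfl fun S _ => ?_
        rw [sum_congr rfl fun x hx => show x / q % p = S / q by
          rw [← (mem_filter.mp hx).2, Nat.mod_mul_right_div_self],
          sum_const, smul_eq_mul, mul_comm, residueCount]
    _ = _ := by
        rw [sum_range_mul_eq_sum_sum]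
        refine sum_congr rfl fun R hR => sum_congr rfl fun j _ => ?_
        rw [Nat.add_mul_div_left _ _ hq, Nat.div_eq_of_lt (mem_range.mp hR), zero_add]

theorem hooks_add_sum_choose_two_eq_mul_hooks {q p : ℕ} (hq : 0 < q) (hp : 0 < p) (X : Finset ℕ) :
    hooks q X + ∑ R ∈ range q, (residueCount q R X).choose 2 =
      p * hooks (q * p) X + ∑ R ∈ range q, ∑ j ∈ range p,
        (j * residueCount (q * p) (R + q * j) X +
          p * (residueCount (q * p) (R + q * j) X).choose 2) := by
  have hdigits : ∑ x ∈ X, x / q = p * ∑ x ∈ X, x / (q * p) + ∑ x ∈ X, x / q % p := by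
    rw [mul_sum, ← sum_add_distrib]
    exact sum_congr rfl fun x _ => by rw [← Nat.div_div_eq_div_mul, Nat.div_add_mod]
  rw [hooks_add_sum_choose_two hq, hdigits, ← hooks_add_sum_choose_two (Nat.mul_pos hq hp),
    sum_div_mod_eq hq hp, sum_range_mul_eq_sum_sum]
  simp only [mul_add, mul_sum, sum_add_distrib]
  ring

theorem residueCount_mul_eq_div {q p R j : ℕ} {X : Finset ℕ}
    (hdefect : hooks q X ≤ p * hooks (q * p) X) (hR : R < q)
    (hdvd : p ∣ residueCount q R X) (hj : j < p) :
    residueCount (q * p) (R + q * j) X = residueCount q R X / p := by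
  have hp : 0 < p := by omega
  have hle : ∀ R ∈ range q, (residueCount q R X).choose 2 ≤ ∑ j ∈ range p,
      (j * residueCount (q * p) (R + q * j) X +
        p * (residueCount (q * p) (R + q * j) X).choose 2) :=
    fun R hR => residueCount_eq_sum hp (mem_range.mp hR) X ▸ choose_two_sum_le _
  have heq := (sum_eq_sum_iff_of_le hle).mp (by
    have := hooks_add_sum_choose_two_eq_mul_hooks (q := q) (by omega) hp X
    have := sum_le_sum hle
    omega) R (mem_range.mpr hR)
  rw [residueCount_eq_sum hp hR] at heq hdvd ⊢
  exact eq_sum_div_of_sum_eq_choose_two (fun j => residueCount (q * p) (R + q * j) X)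
    heq.symm hdvd hj

lemma exists_add_mul_eq_of_lt_mul {q p S : ℕ} (hS : S < q * p) :
    ∃ R < q, ∃ j < p, R + q * j = S := by
  have hq : 0 < q := Nat.pos_of_mul_pos_right (by omega : 0 < q * p)
  exact ⟨S % q, Nat.mod_lt S hq, S / q, (Nat.div_lt_iff_lt_mul hq).mpr (by rwa [mul_comm]),
    Nat.mod_add_div S q⟩

theorem stmt19_general (p M : ℕ) (X : Finset ℕ)
    (h0 : ∀ L < M, tN p L X = 0)
    (hcard : X.card % p ^ M = 0) :
    ∀ L ≤ M, ∀ R < p ^ L, (X.filter fun z => z % p ^ L = R).card = X.card / p ^ L := by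
  intro L hLM
  induction L with
  | zero =>
    intro R hR
    rw [pow_zero, Nat.lt_one_iff] at hR
    simp [hR, Nat.mod_one]
  | succ L ih =>
    intro S hS
    rw [pow_succ] at hS ⊢
    obtain ⟨R, hR, j, hj, rfl⟩ := exists_add_mul_eq_of_lt_mul hS
    have hdefect : hooks (p ^ L) X ≤ p * hooks (p ^ L * p) X := by
      rw [← pow_succ]
      exact Nat.sub_eq_zero_iff_le.mp (h0 L hLM)
    have hclass : residueCount (p ^ L) R X = #X / p ^ L := ih (by omega) R hR
    have hdvd : p ^ L * p ∣ #X :=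
      pow_succ p L ▸ (pow_dvd_pow p hLM).trans (Nat.dvd_of_mod_eq_zero hcard)
    calc residueCount (p ^ L * p) (R + p ^ L * j) X = residueCount (p ^ L) R X / p :=
          residueCount_mul_eq_div hdefect hR (hclass ▸ Nat.dvd_div_of_mul_dvd hdvd) hj
      _ = #X / (p ^ L * p) := by rw [hclass, Nat.div_div_eq_div_mul]

/-- If `ord(X) = M > 0` (i.e. `t_L(X) = 0` for `L < M` and `t_M(X) ≠ 0`) and
`p^M ∣ |X|`, then for every `L ≤ M` the elements of `X` are equidistributed
among the residues mod `p^L`: each class has exactly `|X| / p^L` elements. -/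
theorem stmt19 (p M : ℕ) (hp : 1 < p) (hM : 0 < M) (X : Finset ℕ)
    (h0 : ∀ L < M, tN p L X = 0) (hMne : tN p M X ≠ 0)
    (hcard : X.card % p ^ M = 0) :
    ∀ L ≤ M, ∀ R < p ^ L, (X.filter fun z => z % p ^ L = R).card = X.card / p ^ L :=
  stmt19_general p M X h0 hcard
end
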